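/- Let R be an infinite integral domain, n ≥ 2, and let p(x₁,...,xₙ) = c₀ + Σ_{i=1}^n c_i x_i be an affine polynomial function with c₁,...,cₙ ∈ R. Then p is n-ary associative if and only if p is one of: a constant; the projection x₁; the projection xₙ; c₀ + Σ x_i; or Σ ω^{i-1} x_i for some ω ∈ R with ω^{n-1} = 1 and (if ω ≠ 1) c₀ = 0. -/

import Mathlib

/-- Substituting `f` applied to the window `x_i, ..., x_{i+n-1}` into slot `i`
of `f` applied to the remaining outer variables among `x_1, ..., x_{2n-1}`. -/
def nestAt {R : Type*} (n : ℕ) (f : (Fin n → R) → R) (i : Fin n)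
    (x : Fin (2 * n - 1) → R) : R :=
  f (fun j =>
    if (j : ℕ) < (i : ℕ) then x ⟨j, by have := j.isLt; have := i.isLt; omega⟩
    else if (j : ℕ) = (i : ℕ) then
      f (fun k => x ⟨(i : ℕ) + (k : ℕ), by have := k.isLt; have := i.isLt; omega⟩)
    else x ⟨(j : ℕ) + n - 1, by have := j.isLt; have := i.isLt; omega⟩)

/-- `f` is `n`-ary associative: all the bracketings coincide. -/
def IsNAssoc {R : Type*} (n : ℕ) (f : (Fin n → R) → R) : Prop :=
  ∀ i j : Fin n, ∀ x : Fin (2 * n - 1) → R, nestAt n f i x = nestAt n f j x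

/-!
Substituting the affine map `y ↦ c₀ + ∑ C j * y j` into slot `i` of itself gives again an affine
map of `x 0, …, x (2n-2)`, with constant term `c₀ + C i * c₀` and coefficients `nestCoeff C n i m`,
so associativity says that these do not depend on `i`. Comparing slots `a` and `a + 1` at the
coefficients of `x a`, `x (a+1)` and `x (a+n)` gives `C a * C 0 = C a`,
`C a * C 1 = C (a+1) * C 0` and `C (a+1) * C (n-1) = C (a+1)`. In a domain this leaves `C = 0`,
`C` the indicator of `n - 1`, or `C a = ω ^ a` with `ω ^ n = ω`; the last family contains the
first projection (`ω = 0`), and for it every coefficient `nestCoeff C n i m` is `ω ^ m`, whatever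
the slot. Equality of the constant terms `C i * c₀` then forces `c₀ = 0` unless `C` is constant.
-/

section

open Finset

variable {R : Type*} {n : ℕ}

lemma isNAssoc_eval (k : Fin n) (hk : (k : ℕ) = 0 ∨ (k : ℕ) = n - 1) :
    IsNAssoc n (fun y : Fin n → R => y k) := by
  have key (i : Fin n) (x : Fin (2 * n - 1) → R) :
      nestAt n (fun y => y k) i x = x ⟨2 * k, by omega⟩ := by
    simp only [nestAt]
    split_ifs <;> congr 1 <;> ext <;> simp <;> omega
  intro i j x
  rw [key, key]

variable [CommRing R]

-- Coefficients are indexed by `ℕ` so that the index arithmetic stays in `ℕ`.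
def nestCoeff (C : ℕ → R) (n i m : ℕ) : R :=
  if m < i then C m else if m < i + n then C i * C (m - i) else C (m - n + 1)

theorem nestAt_affine (c₀ : R) (C : ℕ → R) (i : Fin n) (x : Fin (2 * n - 1) → R) :
    nestAt n (fun y => c₀ + ∑ j : Fin n, C j * y j) i x
      = c₀ + C i * c₀ + ∑ m : Fin (2 * n - 1), nestCoeff C n i m * x m := by
  obtain ⟨i, hi⟩ := i
  set X : ℕ → R := fun m => if h : m < 2 * n - 1 then x ⟨m, h⟩ else 0 with hX
  have hx : ∀ m (h : m < 2 * n - 1), x ⟨m, h⟩ = X m := fun m h => by simp only [hX, dif_pos h]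
  set F : ℕ → R := fun j => if j < i then X j
    else if j = i then c₀ + ∑ k ∈ range n, C k * X (i + k) else X (j + n - 1) with hF
  have lhs : nestAt n (fun y => c₀ + ∑ j : Fin n, C j * y j) ⟨i, hi⟩ x
      = c₀ + ∑ j ∈ range n, C j * F j := by
    simp only [nestAt, hx, ← Fin.sum_univ_eq_sum_range, hF]
  have rhs : ∑ m : Fin (2 * n - 1), nestCoeff C n i m * x m
      = ∑ m ∈ range (2 * n - 1), nestCoeff C n i m * X m := by
    simp only [hx, ← Fin.sum_univ_eq_sum_range]
  obtain ⟨t, rfl⟩ : ∃ t, n = i + 1 + t := ⟨n - 1 - i, by omega⟩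
  rw [lhs, rhs, show 2 * (i + 1 + t) - 1 = i + (i + 1 + t) + t by omega,
    sum_range_add, sum_range_succ, sum_range_add, sum_range_add]
  have before : ∀ j ∈ range i, C j * F j = nestCoeff C (i + 1 + t) i j * X j := by
    intro j hj
    simp [F, nestCoeff, mem_range.mp hj]
  have window : C i * F i = C i * c₀
      + ∑ k ∈ range (i + 1 + t), nestCoeff C (i + 1 + t) i (i + k) * X (i + k) := by
    simp only [F, nestCoeff, lt_irrefl, if_false, if_true, mul_add, mul_sum]
    refine congrArg _ (sum_congr rfl fun k hk => ?_)
    simp [mem_range.mp hk, mul_assoc]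
  have after : ∀ s ∈ range t, C (i + 1 + s) * F (i + 1 + s)
      = nestCoeff C (i + 1 + t) i (i + (i + 1 + t) + s) * X (i + (i + 1 + t) + s) := by
    intro s hs
    simp only [F, nestCoeff]
    rw [if_neg (by omega), if_neg (by omega), if_neg (by omega), if_neg (by omega)]
    congr 2 <;> omega
  rw [sum_congr rfl before, window, sum_congr rfl after]
  ring

theorem isNAssoc_affine_iff (c₀ : R) (C : ℕ → R) :
    IsNAssoc n (fun y => c₀ + ∑ j : Fin n, C j * y j) ↔
      (∀ i j : Fin n, C i * c₀ = C j * c₀) ∧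
        ∀ (i j : Fin n) (m : Fin (2 * n - 1)), nestCoeff C n i m = nestCoeff C n j m := by
  simp only [IsNAssoc, nestAt_affine]
  constructor
  · intro h
    have hconst : ∀ i j : Fin n, C i * c₀ = C j * c₀ := fun i j => by
      simpa using h i j 0
    refine ⟨hconst, fun i j m => ?_⟩
    classical
    simpa [Pi.single_apply, hconst i j] using h i j (Pi.single m 1)
  · rintro ⟨hconst, hcoeff⟩ i j x
    simp only [hconst i j, hcoeff i j]

lemma relations_of_nestCoeff_eq {C : ℕ → R}
    (hC : ∀ (i j : Fin n) (m : Fin (2 * n - 1)), nestCoeff C n i m = nestCoeff C n j m)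
    {a : ℕ} (ha : a + 1 < n) :
    C a * C 0 = C a ∧ C a * C 1 = C (a + 1) * C 0 ∧ C (a + 1) * C (n - 1) = C (a + 1) := by
  have h m (hm : m < 2 * n - 1) := hC ⟨a, by omega⟩ ⟨a + 1, ha⟩ ⟨m, hm⟩
  have hn : 1 < n := by omega
  refine ⟨?_, ?_, ?_⟩
  · simpa [nestCoeff, hn, Nat.zero_lt_of_lt hn] using h a (by omega)
  · simpa [nestCoeff, hn, Nat.zero_lt_of_lt hn] using h (a + 1) (by omega)
  · simpa [nestCoeff, Nat.ne_zero_of_lt hn, show a + n - (a + 1) = n - 1 by omega]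
      using (h (a + n) (by omega)).symm

lemma coeff_trichotomy [IsDomain R] {C : ℕ → R} (hn : 2 ≤ n)
    (hrel : ∀ a, a + 1 < n →
      C a * C 0 = C a ∧ C a * C 1 = C (a + 1) * C 0 ∧ C (a + 1) * C (n - 1) = C (a + 1)) :
    (∀ a < n, C a = 0) ∨ (C (n - 1) = 1 ∧ ∀ a < n - 1, C a = 0) ∨
      ∃ ω : R, ω ^ n = ω ∧ ∀ a < n, C a = ω ^ a := by
  by_cases h0 : C 0 = 0
  · have hinit : ∀ a < n - 1, C a = 0 := fun a ha => by
      simpa [h0] using ((hrel a (by omega)).1).symm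
    by_cases hlast : C (n - 1) = 0
    · refine Or.inl fun a ha => ?_
      rcases (by omega : a < n - 1 ∨ a = n - 1) with ha | rfl
      exacts [hinit a ha, hlast]
    · refine Or.inr (Or.inl ⟨mul_left_cancel₀ hlast ?_, hinit⟩)
      simpa [show n - 2 + 1 = n - 1 by omega] using (hrel (n - 2) (by omega)).2.2
  · have h01 : C 0 = 1 := mul_left_cancel₀ h0 (by simpa using (hrel 0 (by omega)).1)
    have hpow : ∀ a < n, C a = C 1 ^ a := by
      intro a
      induction a with
      | zero => simp [h01]
      | succ a ih =>
        intro ha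
        rw [pow_succ, ← ih (by omega), (hrel a ha).2.1, h01, mul_one]
    refine Or.inr (Or.inr ⟨C 1, ?_, hpow⟩)
    have hlast := (hrel 0 (by omega)).2.2
    rwa [zero_add, hpow (n - 1) (by omega), ← pow_succ', Nat.sub_add_cancel (by omega)] at hlast

lemma nestCoeff_pow {ω : R} (hω : ω ^ n = ω) (i m : ℕ) : nestCoeff (ω ^ ·) n i m = ω ^ m := by
  unfold nestCoeff
  split_ifs with h₁ h₂
  · rfl
  · rw [← pow_add, Nat.add_sub_cancel' (by omega)]
  · rw [show m = m - n + n by omega, pow_add, hω, ← pow_succ]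
    congr 1
    omega

lemma isNAssoc_geometric (k ω : R) (hω : ω ^ n = ω) (hk : ω = 1 ∨ k = 0) :
    IsNAssoc n (fun y => k + ∑ j : Fin n, ω ^ (j : ℕ) * y j) := by
  refine (isNAssoc_affine_iff k (ω ^ ·)).mpr ⟨fun i j => ?_, fun i j m => ?_⟩
  · rcases hk with rfl | rfl <;> simp
  · simp only [nestCoeff_pow hω]

lemma sum_mul_eq_apply {C : ℕ → R} (x : Fin n → R) {k : ℕ} (hk : k < n) (hCk : C k = 1)
    (hC : ∀ j < n, j ≠ k → C j = 0) : ∑ j : Fin n, C j * x j = x ⟨k, hk⟩ := by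
  rw [sum_eq_single ⟨k, hk⟩ (fun j _ hj => by rw [hC j j.2 (Fin.val_ne_iff.mpr hj), zero_mul])
    (by simp), hCk, one_mul]

theorem affine_cases_of_isNAssoc [IsDomain R] (hn : 2 ≤ n) (c₀ : R) (C : ℕ → R)
    (p : (Fin n → R) → R) (hp : p = fun x => c₀ + ∑ i : Fin n, C i * x i) (h : IsNAssoc n p) :
    (∃ k : R, p = fun _ => k) ∨
      (p = fun x => x ⟨0, Nat.zero_lt_of_lt hn⟩) ∨
      (p = fun x => x ⟨n - 1, Nat.sub_one_lt_of_lt hn⟩) ∨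
      (p = fun x => c₀ + ∑ i, x i) ∨
      (∃ ω : R, ω ^ (n - 1) = 1 ∧ (ω ≠ 1 → c₀ = 0) ∧
        p = fun x => ∑ i : Fin n, ω ^ i.val * x i) := by
  subst hp
  obtain ⟨hconst, hcoeff⟩ := (isNAssoc_affine_iff c₀ C).mp h
  have h0 : 0 < n := by omega
  have h1 : 1 < n := by omega
  rcases coeff_trichotomy hn (fun a ha => relations_of_nestCoeff_eq hcoeff ha) with
    hzero | ⟨hlast, hinit⟩ | ⟨ω, hω, hpow⟩
  · exact Or.inl ⟨c₀, by simp [hzero]⟩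
  · have hc₀ : c₀ = 0 := by
      simpa [hinit 0 (by omega), hlast, eq_comm] using hconst ⟨0, h0⟩ ⟨n - 1, by omega⟩
    refine Or.inr (Or.inr (Or.inl (funext fun x => ?_)))
    rw [hc₀, zero_add, sum_mul_eq_apply x (by omega) hlast fun j hj hjn => hinit j (by omega)]
  have hc₀ : c₀ = ω * c₀ := by simpa [hpow 0 h0, hpow 1 h1] using hconst ⟨0, h0⟩ ⟨1, h1⟩
  rcases eq_or_ne ω 0 with rfl | hω0
  · refine Or.inr (Or.inl (funext fun x => ?_))
    rw [hc₀, zero_mul, zero_add, sum_mul_eq_apply x h0 (by simp [hpow 0 h0])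
      fun j hj hj0 => by rw [hpow j hj, zero_pow hj0]]
  have hωn : ω ^ (n - 1) = 1 :=
    mul_left_cancel₀ hω0 (by rw [← pow_succ', Nat.sub_one_add_one h0.ne', hω, mul_one])
  rcases eq_or_ne ω 1 with rfl | hω1
  · exact Or.inr (Or.inr (Or.inr (Or.inl (funext fun x => by simp [hpow _ (Fin.is_lt _)]))))
  have hc₀ : c₀ = 0 := by
    have : (1 - ω) * c₀ = 0 := by linear_combination hc₀
    exact (mul_eq_zero.mp this).resolve_left (sub_ne_zero.mpr hω1.symm)
  refine Or.inr (Or.inr (Or.inr (Or.inr ⟨ω, hωn, fun _ => hc₀, funext fun x => ?_⟩)))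
  simp [hc₀, hpow _ (Fin.is_lt _)]

end

theorem stmt_9 {R : Type*} [CommRing R] [IsDomain R]
    (n : ℕ) (hn : 2 ≤ n) (c₀ : R) (c : Fin n → R)
    (p : (Fin n → R) → R) (hp : p = fun x => c₀ + ∑ i, c i * x i) :
    IsNAssoc n p ↔
      ((∃ k : R, p = fun _ => k) ∨
        (p = fun x => x ⟨0, by omega⟩) ∨
        (p = fun x => x ⟨n - 1, by omega⟩) ∨
        (p = fun x => c₀ + ∑ i, x i) ∨
        (∃ ω : R, ω ^ (n - 1) = 1 ∧ (ω ≠ 1 → c₀ = 0) ∧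
          p = fun x => ∑ i : Fin n, ω ^ i.val * x i)) := by
  constructor
  · refine affine_cases_of_isNAssoc hn c₀ (fun j => if h : j < n then c ⟨j, h⟩ else 0) p ?_
    simp [hp]
  · rintro (⟨k, rfl⟩ | rfl | rfl | rfl | ⟨ω, hω, -, rfl⟩)
    · exact fun _ _ _ => rfl
    · exact isNAssoc_eval _ (by simp)
    · exact isNAssoc_eval _ (by simp)
    · simpa using isNAssoc_geometric c₀ (1 : R) (one_pow n) (.inl rfl)
    · simpa using isNAssoc_geometric (n := n) 0 ω
        (by rw [← pow_sub_one_mul (by omega), hω, one_mul]) (.inr rfl)
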